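/- arXiv:1505.07391 — 3 statements merged into one kernel-verified Lean document; each statement's English description precedes it below -/
import Mathlib

section
/- Let n ≥ 1 be an integer and μ > 0 a real number. Let X₁, …, Xₙ be independent random variables on a probability space, each taking values in ℕ = {0,1,2,…}, such that for every i and every m ∈ ℕ one has P[Xᵢ ≥ m] ≤ (μ/(μ+1))^m (i.e., each Xᵢ is stochastically dominated by a geometric random variable over {0,1,2,…} with expected value μ). Then for all real numbers a ≥ 2 and b ≥ 0, P[X₁ + ⋯ + Xₙ ≥ (μ+1)(a·n + b)] < exp(−(a·n + b)/(2(μ+1))). -/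
/-!
If `P[Y ≥ m] ≤ qᵐ`, summing `x ^ Y = 1 + ∑_{m < Y} (x - 1) xᵐ` against the tails gives
`E[x ^ Y] ≤ (1 - q) / (1 - q x)`, the generating function of the geometric law. At
`t = (1 - q) / 2 = 1 / (2 (μ + 1))` the moment generating function `(1 - q) / (1 - q eᵗ)`
is below `e^q`, because `(1 - t) eᵗ < 1`. Independence multiplies these bounds, and the
Chernoff bound gives `P[∑ Xᵢ ≥ (μ + 1) s] ≤ exp (-s / 2 + n q) ≤ exp (-s / (2 (μ + 1)))`
for `s = a n + b ≥ 2 n`.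
-/

open MeasureTheory ProbabilityTheory Finset

theorem one_sub_mul_exp_lt_one {t : ℝ} (ht : t ≠ 0) : (1 - t) * Real.exp t < 1 := by
  simpa [← Real.exp_add] using
    mul_lt_mul_of_pos_right (Real.one_sub_lt_exp_neg ht) (Real.exp_pos t)

theorem mul_exp_half_one_sub_lt_one {q : ℝ} (hq0 : 0 < q) (hq1 : q < 1) :
    q * Real.exp ((1 - q) / 2) < 1 := by
  have key := one_sub_mul_exp_lt_one (t := (1 - q) / 2) (by linarith)
  nlinarith [Real.exp_pos ((1 - q) / 2)]

theorem one_sub_div_one_sub_mul_exp_half_lt_exp {q : ℝ} (hq0 : 0 < q) (hq1 : q < 1) :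
    (1 - q) / (1 - q * Real.exp ((1 - q) / 2)) < Real.exp q := by
  have key := one_sub_mul_exp_lt_one (t := (1 - q) / 2) (by linarith)
  have hD : 0 < 1 - q * Real.exp ((1 - q) / 2) := by linarith [mul_exp_half_one_sub_lt_one hq0 hq1]
  calc (1 - q) / (1 - q * Real.exp ((1 - q) / 2)) < q + 1 := by
        rw [div_lt_iff₀ hD]
        nlinarith
    _ ≤ Real.exp q := Real.add_one_le_exp q

section

variable {Ω : Type*} [MeasurableSpace Ω] {P : Measure Ω} {Y : Ω → ℕ}

theorem lintegral_sum_range_eq_tsum_mul_measure_lt (hY : Measurable Y) (g : ℕ → ENNReal) :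
    ∫⁻ ω, ∑ m ∈ range (Y ω), g m ∂P = ∑' m, g m * P {ω | m < Y ω} := by
  have hset : ∀ m, MeasurableSet {ω | m < Y ω} := fun m => measurableSet_lt measurable_const hY
  calc ∫⁻ ω, ∑ m ∈ range (Y ω), g m ∂P
      = ∫⁻ ω, ∑' m, {ω | m < Y ω}.indicator (fun _ => g m) ω ∂P := by
        refine lintegral_congr fun ω => ?_
        rw [tsum_eq_sum (s := range (Y ω)) fun m hm => by simp_all]
        exact sum_congr rfl fun m hm => by simp_all
    _ = ∑' m, g m * P {ω | m < Y ω} := by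
        rw [lintegral_tsum fun m => (measurable_const.indicator (hset m)).aemeasurable]
        exact tsum_congr fun m => lintegral_indicator_const (hset m) _

theorem lintegral_pow_le_of_measure_le_pow [IsProbabilityMeasure P] {x q : ℝ} (hx : 1 ≤ x)
    (hq : 0 ≤ q) (hqx : q * x < 1) (hY : Measurable Y)
    (htail : ∀ m : ℕ, P {ω | m ≤ Y ω} ≤ ENNReal.ofReal (q ^ m)) :
    ∫⁻ ω, ENNReal.ofReal (x ^ Y ω) ∂P ≤ ENNReal.ofReal ((1 - q) / (1 - q * x)) := by
  have hqx0 : 0 ≤ q * x := by positivity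
  have hinc : ∀ m : ℕ, 0 ≤ (x - 1) * x ^ m := fun m => by
    have : 0 ≤ x - 1 := by linarith
    positivity
  have hpow : ∀ N : ℕ,
      ENNReal.ofReal (x ^ N) = 1 + ∑ m ∈ range N, ENNReal.ofReal ((x - 1) * x ^ m) := by
    intro N
    rw [← ENNReal.ofReal_sum_of_nonneg fun m _ => hinc m, ← ENNReal.ofReal_one,
      ← ENNReal.ofReal_add zero_le_one (sum_nonneg fun m _ => hinc m), ← mul_sum, mul_comm,
      geom_sum_mul, add_sub_cancel]
  have hsum : HasSum (fun m : ℕ => (x - 1) * q * (q * x) ^ m) ((x - 1) * q / (1 - q * x)) := by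
    rw [div_eq_mul_inv]
    exact (hasSum_geometric_of_lt_one hqx0 hqx).mul_left _
  calc ∫⁻ ω, ENNReal.ofReal (x ^ Y ω) ∂P
      = 1 + ∑' m : ℕ, ENNReal.ofReal ((x - 1) * x ^ m) * P {ω | m < Y ω} := by
        simp_rw [hpow]
        rw [lintegral_add_left measurable_const, lintegral_const, measure_univ, mul_one,
          lintegral_sum_range_eq_tsum_mul_measure_lt hY]
    _ ≤ 1 + ∑' m : ℕ, ENNReal.ofReal ((x - 1) * x ^ m) * ENNReal.ofReal (q ^ (m + 1)) := by
        gcongr with m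
        exact htail (m + 1)
    _ = 1 + ENNReal.ofReal ((x - 1) * q / (1 - q * x)) := by
        rw [← hsum.tsum_eq, ENNReal.ofReal_tsum_of_nonneg (fun m => by positivity) hsum.summable]
        congr 1
        refine tsum_congr fun m => ?_
        rw [← ENNReal.ofReal_mul (hinc m)]
        congr 1
        ring
    _ = ENNReal.ofReal ((1 - q) / (1 - q * x)) := by
        rw [← ENNReal.ofReal_one, ← ENNReal.ofReal_add zero_le_one (by positivity),
          one_add_div (by linarith)]
        congr 1
        ring

variable [IsProbabilityMeasure P] {q t : ℝ}

theorem lintegral_exp_mul_le_of_measure_le_pow (hq : 0 ≤ q) (ht : 0 ≤ t)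
    (hqt : q * Real.exp t < 1) (hY : Measurable Y)
    (htail : ∀ m : ℕ, P {ω | m ≤ Y ω} ≤ ENNReal.ofReal (q ^ m)) :
    ∫⁻ ω, ENNReal.ofReal (Real.exp (t * Y ω)) ∂P ≤
      ENNReal.ofReal ((1 - q) / (1 - q * Real.exp t)) := by
  simp_rw [mul_comm t, Real.exp_nat_mul]
  exact lintegral_pow_le_of_measure_le_pow (Real.one_le_exp ht) hq hqt hY htail

theorem integrable_exp_mul_of_measure_le_pow (hq : 0 ≤ q) (ht : 0 ≤ t)
    (hqt : q * Real.exp t < 1) (hY : Measurable Y)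
    (htail : ∀ m : ℕ, P {ω | m ≤ Y ω} ≤ ENNReal.ofReal (q ^ m)) :
    Integrable (fun ω => Real.exp (t * Y ω)) P := by
  refine ⟨by fun_prop, ?_⟩
  rw [hasFiniteIntegral_iff_ofReal (.of_forall fun ω => (Real.exp_pos _).le)]
  exact (lintegral_exp_mul_le_of_measure_le_pow hq ht hqt hY htail).trans_lt ENNReal.ofReal_lt_top

theorem mgf_le_of_measure_le_pow (hq : 0 ≤ q) (ht : 0 ≤ t)
    (hqt : q * Real.exp t < 1) (hY : Measurable Y)
    (htail : ∀ m : ℕ, P {ω | m ≤ Y ω} ≤ ENNReal.ofReal (q ^ m)) :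
    mgf (fun ω => (Y ω : ℝ)) P t ≤ (1 - q) / (1 - q * Real.exp t) := by
  have hq1 : q ≤ 1 := by nlinarith [Real.one_le_exp ht]
  rw [mgf, integral_eq_lintegral_of_nonneg_ae (.of_forall fun ω => (Real.exp_pos _).le)
    (by fun_prop)]
  exact ENNReal.toReal_le_of_le_ofReal (div_nonneg (by linarith) (by linarith))
    (lintegral_exp_mul_le_of_measure_le_pow hq ht hqt hY htail)

theorem measure_sum_ge_le_of_measure_le_pow {ι : Type*} [Fintype ι] {X : ι → Ω → ℕ}
    (hX : ∀ i, Measurable (X i)) (hindep : iIndepFun X P) (hq : 0 ≤ q) (ht : 0 ≤ t)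
    (hqt : q * Real.exp t < 1)
    (htail : ∀ i (m : ℕ), P {ω | m ≤ X i ω} ≤ ENNReal.ofReal (q ^ m)) (ε : ℝ) :
    P {ω | ε ≤ ((∑ i, X i ω : ℕ) : ℝ)} ≤
      ENNReal.ofReal (Real.exp (-t * ε) * ((1 - q) / (1 - q * Real.exp t)) ^ Fintype.card ι) := by
  set Y : ι → Ω → ℝ := fun i ω => (X i ω : ℝ)
  have hYmeas : ∀ i, Measurable (Y i) := fun i => by fun_prop
  have hYindep : iIndepFun Y P := hindep.comp (fun _ => Nat.cast) fun _ => measurable_from_top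
  have hint : Integrable (fun ω => Real.exp (t * (∑ i, Y i) ω)) P :=
    hYindep.integrable_exp_mul_sum hYmeas fun i _ =>
      integrable_exp_mul_of_measure_le_pow hq ht hqt (hX i) (htail i)
  have hmgf : mgf (∑ i, Y i) P t ≤ ((1 - q) / (1 - q * Real.exp t)) ^ Fintype.card ι := by
    rw [hYindep.mgf_sum hYmeas, ← card_univ, ← prod_const]
    exact prod_le_prod (fun i _ => mgf_nonneg) fun i _ =>
      mgf_le_of_measure_le_pow hq ht hqt (hX i) (htail i)
  have hset : {ω | ε ≤ ((∑ i, X i ω : ℕ) : ℝ)} = {ω | ε ≤ (∑ i, Y i) ω} := by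
    ext ω
    simp [Y]
  rw [hset, ENNReal.le_ofReal_iff_toReal_le (measure_ne_top _ _)
    (mul_nonneg (Real.exp_pos _).le (mgf_nonneg.trans hmgf))]
  calc (P {ω | ε ≤ (∑ i, Y i) ω}).toReal ≤ Real.exp (-t * ε) * mgf (∑ i, Y i) P t :=
        measure_ge_le_exp_mul_mgf ε ht hint
    _ ≤ _ := by gcongr

end

/-- Sum of independent geometrically-dominated random variables: if each `Xᵢ` has tail
`P[Xᵢ ≥ m] ≤ (μ/(μ+1))^m`, then `P[∑ Xᵢ ≥ (μ+1)(an+b)] < exp(−(an+b)/(2(μ+1)))`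
for all `a ≥ 2`, `b ≥ 0`. -/
theorem sum_geometric_tail_bound
    {Ω : Type*} [MeasurableSpace Ω] (P : Measure Ω) [IsProbabilityMeasure P]
    (n : ℕ) (hn : 1 ≤ n) (μ : ℝ) (hμ : 0 < μ)
    (X : Fin n → Ω → ℕ) (hmeas : ∀ i, Measurable (X i))
    (hindep : iIndepFun X P)
    (htail : ∀ i (m : ℕ), P {ω | m ≤ X i ω} ≤ ENNReal.ofReal ((μ / (μ + 1)) ^ m))
    (a b : ℝ) (ha : 2 ≤ a) (hb : 0 ≤ b) :
    P {ω | (μ + 1) * (a * n + b) ≤ ((∑ i, X i ω : ℕ) : ℝ)} <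
      ENNReal.ofReal (Real.exp (-(a * (n : ℝ) + b) / (2 * (μ + 1)))) := by
  set q := μ / (μ + 1) with hq
  have hq0 : 0 < q := by positivity
  have hq1 : q < 1 := (div_lt_one (by positivity)).2 (by linarith)
  have hqt := mul_exp_half_one_sub_lt_one hq0 hq1
  refine (measure_sum_ge_le_of_measure_le_pow hmeas hindep hq0.le (by linarith) hqt htail
    ((μ + 1) * (a * n + b))).trans_lt ?_
  rw [Fintype.card_fin, ENNReal.ofReal_lt_ofReal_iff (Real.exp_pos _)]
  have hs : 2 * (n : ℝ) ≤ a * n + b := by nlinarith [(Nat.one_le_cast (α := ℝ)).2 hn]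
  calc _ < Real.exp (-((1 - q) / 2) * ((μ + 1) * (a * n + b))) * Real.exp q ^ n := by
        gcongr
        exact one_sub_div_one_sub_mul_exp_half_lt_exp hq0 hq1
    _ ≤ Real.exp (-(a * (n : ℝ) + b) / (2 * (μ + 1))) := by
        rw [← Real.exp_nat_mul, ← Real.exp_add, Real.exp_le_exp, hq]
        field_simp
        ring_nf
        nlinarith [mul_le_mul_of_nonneg_left hs hμ.le]
end

section
/- Let β ≥ 2 and n ≥ 1 be integers, and let Y₁, …, Yₙ be independent identically distributed geometric random variables over {0,1,2,…} with parameter (β−1)/β, so that E[Yᵢ] = 1/(β−1). Then for every integer m ≥ 1, P[Y₁ + ⋯ + Yₙ ≥ 4n + m] < (0.883)^m. -/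
/-!
Chernoff bound with base `t = 8/5`. By Markov's inequality and independence,
`t ^ (4n + m) · P[∑ Yᵢ ≥ 4n + m] ≤ ∏ E[t ^ Yᵢ]`, and for a geometric variable with parameter `p`
we have `E[t ^ Y] = p / (1 - t (1 - p)) ≤ 5` because `1 - p = 1/β ≤ 1/2`. Hence the probability is
at most `5ⁿ (5/8) ^ (4n + m) = (3125/4096)ⁿ (5/8)ᵐ < 0.883ᵐ`.
-/

open MeasureTheory ProbabilityTheory
open scoped ENNReal

section Chernoff

variable {Ω : Type*} [MeasurableSpace Ω] {P : Measure Ω}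

theorem lintegral_pow_eq_tsum_pow_mul_measure {Y : Ω → ℕ} (hY : Measurable Y) (t : ℝ≥0∞) :
    ∫⁻ ω, t ^ Y ω ∂P = ∑' j, t ^ j * P {ω | Y ω = j} := by
  rw [← lintegral_map measurable_from_nat hY, lintegral_countable']
  refine tsum_congr fun j => ?_
  rw [Measure.map_apply hY (measurableSet_singleton j)]
  rfl

theorem ProbabilityTheory.iIndepFun.pow_mul_measure_le_sum_le_prod_lintegral_pow {ι : Type*}
    [Fintype ι] {Y : ι → Ω → ℕ} (hY : ∀ i, Measurable (Y i)) (hindep : iIndepFun Y P)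
    {t : ℝ≥0∞} (ht : 1 ≤ t) (k : ℕ) :
    t ^ k * P {ω | k ≤ ∑ i, Y i ω} ≤ ∏ i, ∫⁻ ω, t ^ Y i ω ∂P :=
  calc t ^ k * P {ω | k ≤ ∑ i, Y i ω}
      ≤ t ^ k * P {ω | t ^ k ≤ t ^ ∑ i, Y i ω} := by
        gcongr
        exact pow_le_pow_right₀ ht
    _ ≤ ∫⁻ ω, t ^ ∑ i, Y i ω ∂P :=
        mul_meas_ge_le_lintegral
          (measurable_from_nat.comp (Finset.measurable_sum _ fun i _ => hY i)) _
    _ = ∫⁻ ω, ∏ i, t ^ Y i ω ∂P := by simp_rw [Finset.prod_pow_eq_pow_sum]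
    _ = ∏ i, ∫⁻ ω, t ^ Y i ω ∂P :=
        lintegral_prod_eq_prod_lintegral_of_indepFun _ _
          (hindep.comp _ fun _ => measurable_from_nat) fun i => measurable_from_nat.comp (hY i)

theorem tsum_ofReal_pow_mul_geometric {p t : ℝ} (hp : 0 ≤ p) (hp1 : p ≤ 1) (ht : 0 ≤ t)
    (htp : t * (1 - p) < 1) :
    ∑' j : ℕ, ENNReal.ofReal t ^ j * ENNReal.ofReal ((1 - p) ^ j * p) =
      ENNReal.ofReal (p / (1 - t * (1 - p))) := by
  have hterm : ∀ j : ℕ, t ^ j * ((1 - p) ^ j * p) = p * (t * (1 - p)) ^ j := fun j => by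
    rw [mul_pow]; ring
  have hsum : HasSum (fun j : ℕ => t ^ j * ((1 - p) ^ j * p)) (p / (1 - t * (1 - p))) := by
    simp_rw [hterm, div_eq_mul_inv]
    exact (hasSum_geometric_of_lt_one (by nlinarith) htp).mul_left p
  rw [← hsum.tsum_eq, ENNReal.ofReal_tsum_of_nonneg _ hsum.summable]
  · simp_rw [ENNReal.ofReal_mul (pow_nonneg ht _), ENNReal.ofReal_pow ht]
  · exact fun j => mul_nonneg (pow_nonneg ht _) (mul_nonneg (pow_nonneg (by linarith) _) hp)

theorem lintegral_ofReal_pow_of_geometric {Y : Ω → ℕ} (hY : Measurable Y) {p t : ℝ}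
    (hp : 0 ≤ p) (hp1 : p ≤ 1) (ht : 0 ≤ t) (htp : t * (1 - p) < 1)
    (hgeom : ∀ j : ℕ, P {ω | Y ω = j} = ENNReal.ofReal ((1 - p) ^ j * p)) :
    ∫⁻ ω, ENNReal.ofReal t ^ Y ω ∂P = ENNReal.ofReal (p / (1 - t * (1 - p))) := by
  simp_rw [lintegral_pow_eq_tsum_pow_mul_measure hY, hgeom]
  exact tsum_ofReal_pow_mul_geometric hp hp1 ht htp

end Chernoff

theorem five_pow_div_eight_fifths_pow_lt (n : ℕ) {m : ℕ} (hm : 1 ≤ m) :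
    (5 : ℝ) ^ n / (8 / 5) ^ (4 * n + m) < 0.883 ^ m :=
  calc (5 : ℝ) ^ n / (8 / 5) ^ (4 * n + m) = (3125 / 4096) ^ n * (5 / 8) ^ m := by
        rw [pow_add, pow_mul, ← div_div, ← div_pow, div_eq_mul_inv _ ((8 / 5 : ℝ) ^ m),
          ← inv_pow]
        norm_num
    _ ≤ (5 / 8) ^ m :=
        mul_le_of_le_one_left (by positivity) (pow_le_one₀ (by norm_num) (by norm_num))
    _ < 0.883 ^ m := pow_lt_pow_left₀ (by norm_num) (by norm_num) (by omega)

theorem hirb_node_count_bound_general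
    {Ω : Type*} [MeasurableSpace Ω] (P : Measure Ω) [IsProbabilityMeasure P]
    (β n : ℕ) (hβ : 2 ≤ β)
    (Y : Fin n → Ω → ℕ) (hmeas : ∀ i, Measurable (Y i))
    (hindep : iIndepFun Y P)
    (hgeom : ∀ i (j : ℕ),
      P {ω | Y i ω = j} =
        ENNReal.ofReal ((1 - ((β : ℝ) - 1) / β) ^ j * (((β : ℝ) - 1) / β)))
    (m : ℕ) (hm : 1 ≤ m) :
    P {ω | 4 * n + m ≤ ∑ i, Y i ω} < ENNReal.ofReal ((0.883 : ℝ) ^ m) := by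
  set p : ℝ := ((β : ℝ) - 1) / β
  have hβ' : (2 : ℝ) ≤ β := by exact_mod_cast hβ
  have hq : 1 - p = 1 / β := by simp only [p]; field_simp; ring
  have hq_half : 1 - p ≤ 1 / 2 := hq ▸ one_div_le_one_div_of_le two_pos hβ'
  have hp0 : 0 ≤ p := div_nonneg (by linarith) (by linarith)
  have hp1 : p ≤ 1 := by linarith [show (0 : ℝ) ≤ 1 / β by positivity]
  have hfactor : ∀ i, ∫⁻ ω, ENNReal.ofReal (8 / 5) ^ Y i ω ∂P ≤ ENNReal.ofReal 5 := fun i => by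
    rw [lintegral_ofReal_pow_of_geometric (hmeas i) hp0 hp1 (by norm_num) (by linarith) (hgeom i)]
    exact ENNReal.ofReal_le_ofReal ((div_le_iff₀ (by linarith)).2 (by linarith))
  have hchernoff : ENNReal.ofReal (8 / 5) ^ (4 * n + m) * P {ω | 4 * n + m ≤ ∑ i, Y i ω} ≤
      ENNReal.ofReal 5 ^ n :=
    calc _ ≤ ∏ i, ∫⁻ ω, ENNReal.ofReal (8 / 5) ^ Y i ω ∂P :=
          hindep.pow_mul_measure_le_sum_le_prod_lintegral_pow hmeas (by norm_num) _
      _ ≤ ∏ _ : Fin n, ENNReal.ofReal 5 := Finset.prod_le_prod' fun i _ => hfactor i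
      _ = ENNReal.ofReal 5 ^ n := by simp
  calc P {ω | 4 * n + m ≤ ∑ i, Y i ω}
      ≤ ENNReal.ofReal 5 ^ n / ENNReal.ofReal (8 / 5) ^ (4 * n + m) :=
        by
        rw [ENNReal.le_div_iff_mul_le (by simp) (by simp), mul_comm]
        exact hchernoff
    _ = ENNReal.ofReal (5 ^ n / (8 / 5) ^ (4 * n + m)) := by
        rw [← ENNReal.ofReal_pow (by norm_num), ← ENNReal.ofReal_pow (by norm_num),
          ← ENNReal.ofReal_div_of_pos (by positivity)]
    _ < ENNReal.ofReal ((0.883 : ℝ) ^ m) :=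
        (ENNReal.ofReal_lt_ofReal_iff (by positivity)).2 (five_pow_div_eight_fifths_pow_lt n hm)

/-- Sum of `n` iid geometric random variables with parameter `(β−1)/β` (so expected value
`1/(β−1)`) exceeds `4n + m` with probability less than `0.883^m`. -/
theorem hirb_node_count_bound
    {Ω : Type*} [MeasurableSpace Ω] (P : Measure Ω) [IsProbabilityMeasure P]
    (β n : ℕ) (hβ : 2 ≤ β) (hn : 1 ≤ n)
    (Y : Fin n → Ω → ℕ) (hmeas : ∀ i, Measurable (Y i))
    (hindep : iIndepFun Y P)
    (hgeom : ∀ i (j : ℕ),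
      P {ω | Y i ω = j} =
        ENNReal.ofReal ((1 - ((β : ℝ) - 1) / β) ^ j * (((β : ℝ) - 1) / β)))
    (m : ℕ) (hm : 1 ≤ m) :
    P {ω | 4 * n + m ≤ ∑ i, Y i ω} < ENNReal.ofReal ((0.883 : ℝ) ^ m) :=
  hirb_node_count_bound_general P β n hβ Y hmeas hindep hgeom m hm
end

section
/- Let β ≥ 2, H ≥ 1, n ≥ 1, and m ≥ 1 be integers with n ≤ β^H, and let S be a binomial random variable with n trials and success probability p = β^{−H}. Then P[S ≥ m·β] ≤ 2^{1−m·β} ≤ (1/2)^m. -/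
open MeasureTheory
open scoped Nat

/-!
With `p = β^{-H}` and `k = mβ`, the tail `P[S ≥ k]` is at most `C(n,k) p^k` — the chance that some
fixed `k` trials all succeed — which follows from `C(n,k+j) ≤ C(n,k) C(n-k,j)` and the binomial
theorem for `n - k` trials. Since `np ≤ 1`, `C(n,k) p^k ≤ (np)^k / k! ≤ 1 / k! ≤ 2^{1-k}`.
-/

theorem Nat.choose_add_le_choose_mul_choose_sub (n k j : ℕ) :
    n.choose (k + j) ≤ n.choose k * (n - k).choose j := by
  calc n.choose (k + j) ≤ n.choose (k + j) * (k + j).choose k :=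
        Nat.le_mul_of_pos_right _ (Nat.choose_pos (Nat.le_add_right k j))
    _ = n.choose k * (n - k).choose j := by
        rw [Nat.choose_mul (Nat.le_add_right k j), Nat.add_sub_cancel_left]

section binomialWeight

open Finset

variable {R : Type*} [CommRing R] {p : R}

def binomialWeight (n : ℕ) (p : R) (j : ℕ) : R :=
  n.choose j * p ^ j * (1 - p) ^ (n - j)

theorem binomialWeight_eq_zero_of_lt {n j : ℕ} (h : n < j) : binomialWeight n p j = 0 := by
  simp [binomialWeight, Nat.choose_eq_zero_of_lt h]

theorem sum_range_succ_binomialWeight (n : ℕ) (p : R) :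
    ∑ j ∈ range (n + 1), binomialWeight n p j = 1 := by
  have := (add_pow p (1 - p) n).symm
  rw [add_sub_cancel, one_pow] at this
  rw [← this]
  exact sum_congr rfl fun j _ => by rw [binomialWeight]; ring

variable [LinearOrder R] [IsStrictOrderedRing R]

theorem binomialWeight_nonneg (hp₀ : 0 ≤ p) (hp₁ : p ≤ 1) (n j : ℕ) :
    0 ≤ binomialWeight n p j :=
  mul_nonneg (mul_nonneg (Nat.cast_nonneg _) (pow_nonneg hp₀ _)) (pow_nonneg (sub_nonneg.2 hp₁) _)

theorem sum_range_binomialWeight_le_one (hp₀ : 0 ≤ p) (hp₁ : p ≤ 1) (n N : ℕ) :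
    ∑ j ∈ range N, binomialWeight n p j ≤ 1 := by
  calc ∑ j ∈ range N, binomialWeight n p j
      ≤ ∑ j ∈ range (N + (n + 1)), binomialWeight n p j :=
        sum_le_sum_of_subset_of_nonneg (range_mono (Nat.le_add_right _ _))
          fun j _ _ => binomialWeight_nonneg hp₀ hp₁ n j
    _ = ∑ j ∈ range (n + 1), binomialWeight n p j := by
        refine (sum_subset (range_mono (Nat.le_add_left _ _)) fun j _ hj => ?_).symm
        exact binomialWeight_eq_zero_of_lt (by simpa using hj)
    _ = 1 := sum_range_succ_binomialWeight n p

theorem binomialWeight_add_le (hp₀ : 0 ≤ p) (hp₁ : p ≤ 1) (n k j : ℕ) :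
    binomialWeight n p (k + j) ≤ n.choose k * p ^ k * binomialWeight (n - k) p j := by
  have hchoose : (n.choose (k + j) : R) ≤ n.choose k * (n - k).choose j := by
    exact_mod_cast Nat.choose_add_le_choose_mul_choose_sub n k j
  calc binomialWeight n p (k + j)
      = n.choose (k + j) * (p ^ k * p ^ j * (1 - p) ^ (n - k - j)) := by
        rw [binomialWeight, pow_add, Nat.sub_add_eq]; ring
    _ ≤ n.choose k * (n - k).choose j * (p ^ k * p ^ j * (1 - p) ^ (n - k - j)) := by
        gcongr
    _ = n.choose k * p ^ k * binomialWeight (n - k) p j := by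
        rw [binomialWeight]; ring

theorem sum_range_binomialWeight_add_le (hp₀ : 0 ≤ p) (hp₁ : p ≤ 1) (n k N : ℕ) :
    ∑ j ∈ range N, binomialWeight n p (k + j) ≤ n.choose k * p ^ k := by
  calc ∑ j ∈ range N, binomialWeight n p (k + j)
      ≤ ∑ j ∈ range N, n.choose k * p ^ k * binomialWeight (n - k) p j :=
        sum_le_sum fun j _ => binomialWeight_add_le hp₀ hp₁ n k j
    _ = n.choose k * p ^ k * ∑ j ∈ range N, binomialWeight (n - k) p j := (mul_sum ..).symm
    _ ≤ n.choose k * p ^ k :=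
        mul_le_of_le_one_right (by positivity) (sum_range_binomialWeight_le_one hp₀ hp₁ _ N)

end binomialWeight

theorem measure_setOf_le_le_tsum {Ω : Type*} [MeasurableSpace Ω] (μ : Measure Ω)
    (S : Ω → ℕ) (k : ℕ) :
    μ {ω | k ≤ S ω} ≤ ∑' j, μ {ω | S ω = k + j} := by
  refine (measure_mono fun ω (hω : k ≤ S ω) => ?_).trans (measure_iUnion_le _)
  exact Set.mem_iUnion.2 ⟨S ω - k, by simp only [Set.mem_ofPred_eq]; omega⟩

theorem inv_factorial_le_two_zpow_one_sub (k : ℕ) : (k ! : ℝ)⁻¹ ≤ (2 : ℝ) ^ (1 - (k : ℤ)) := by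
  rcases k with _ | k
  · norm_num
  have h : 2 ^ k ≤ (k + 1)! := by
    simpa [add_comm] using Nat.factorial_mul_pow_le_factorial (m := 1) (n := k)
  rw [show (1 : ℤ) - ((k + 1 : ℕ) : ℤ) = -(k : ℤ) by push_cast; ring, zpow_neg, zpow_natCast]
  exact inv_anti₀ (by positivity) (by exact_mod_cast h)

theorem choose_mul_pow_le_inv_factorial {n : ℕ} {p : ℝ} (hp : 0 ≤ p) (hnp : n * p ≤ 1) (k : ℕ) :
    n.choose k * p ^ k ≤ (k ! : ℝ)⁻¹ := by
  calc (n.choose k : ℝ) * p ^ k ≤ n ^ k / k ! * p ^ k :=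
        mul_le_mul_of_nonneg_right (Nat.choose_le_pow_div k n) (by positivity)
    _ = (n * p) ^ k * (k ! : ℝ)⁻¹ := by ring
    _ ≤ (k ! : ℝ)⁻¹ :=
        mul_le_of_le_one_left (by positivity) (pow_le_one₀ (by positivity) hnp)

theorem two_zpow_one_sub_mul_le_half_pow {m β : ℕ} (hm : 1 ≤ m) (hβ : 2 ≤ β) :
    (2 : ℝ) ^ ((1 : ℤ) - m * β) ≤ (1 / 2 : ℝ) ^ m := by
  rw [one_div, inv_pow, ← zpow_natCast, ← zpow_neg]
  refine zpow_le_zpow_right₀ one_le_two ?_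
  have : (m : ℤ) * 2 ≤ m * β := by gcongr; exact_mod_cast hβ
  omega

theorem hirb_root_size_bound_general
    {Ω : Type*} [MeasurableSpace Ω] (P : Measure Ω)
    (β H n m : ℕ) (hβ : 2 ≤ β) (hm : 1 ≤ m)
    (hnH : n ≤ β ^ H)
    (S : Ω → ℕ)
    (hbin : ∀ j : ℕ, P {ω | S ω = j} =
      ENNReal.ofReal
        ((n.choose j : ℝ) * (((β : ℝ) ^ H)⁻¹) ^ j * (1 - ((β : ℝ) ^ H)⁻¹) ^ (n - j))) :
    P {ω | m * β ≤ S ω} ≤ ENNReal.ofReal ((2 : ℝ) ^ ((1 : ℤ) - (m : ℤ) * (β : ℤ))) ∧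
      (2 : ℝ) ^ ((1 : ℤ) - (m : ℤ) * (β : ℤ)) ≤ (1 / 2 : ℝ) ^ m := by
  set p : ℝ := ((β : ℝ) ^ H)⁻¹
  have hβH : (1 : ℝ) ≤ (β : ℝ) ^ H := one_le_pow₀ (by exact_mod_cast (by omega : 1 ≤ β))
  have hp₀ : 0 ≤ p := by positivity
  have hp₁ : p ≤ 1 := inv_le_one_of_one_le₀ hβH
  have hnp : n * p ≤ 1 := mul_inv_le_one_of_le₀ (by exact_mod_cast hnH) (by positivity)
  refine ⟨?_, two_zpow_one_sub_mul_le_half_pow hm hβ⟩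
  calc P {ω | m * β ≤ S ω} ≤ ∑' j, P {ω | S ω = m * β + j} :=
        measure_setOf_le_le_tsum P S (m * β)
    _ = ∑' j, ENNReal.ofReal (binomialWeight n p (m * β + j)) := tsum_congr fun j => hbin _
    _ ≤ ENNReal.ofReal (n.choose (m * β) * p ^ (m * β)) := by
        refine ENNReal.tsum_le_of_sum_range_le fun N => ?_
        rw [← ENNReal.ofReal_sum_of_nonneg fun j _ => binomialWeight_nonneg hp₀ hp₁ n _]
        exact ENNReal.ofReal_le_ofReal (sum_range_binomialWeight_add_le hp₀ hp₁ n _ N)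
    _ ≤ ENNReal.ofReal ((2 : ℝ) ^ ((1 : ℤ) - (m : ℤ) * (β : ℤ))) := by
        refine ENNReal.ofReal_le_ofReal ((choose_mul_pow_le_inv_factorial hp₀ hnp _).trans ?_)
        exact_mod_cast inv_factorial_le_two_zpow_one_sub (m * β)

/-- For a binomial random variable `S` with `n ≤ β^H` trials and success probability
`β^{−H}`, one has `P[S ≥ mβ] ≤ 2^{1−mβ} ≤ (1/2)^m`. -/
theorem hirb_root_size_bound
    {Ω : Type*} [MeasurableSpace Ω] (P : Measure Ω) [IsProbabilityMeasure P]
    (β H n m : ℕ) (hβ : 2 ≤ β) (hH : 1 ≤ H) (hn : 1 ≤ n) (hm : 1 ≤ m)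
    (hnH : n ≤ β ^ H)
    (S : Ω → ℕ) (hmeas : Measurable S)
    (hbin : ∀ j : ℕ, P {ω | S ω = j} =
      ENNReal.ofReal
        ((n.choose j : ℝ) * (((β : ℝ) ^ H)⁻¹) ^ j * (1 - ((β : ℝ) ^ H)⁻¹) ^ (n - j))) :
    P {ω | m * β ≤ S ω} ≤ ENNReal.ofReal ((2 : ℝ) ^ ((1 : ℤ) - (m : ℤ) * (β : ℤ))) ∧
      (2 : ℝ) ^ ((1 : ℤ) - (m : ℤ) * (β : ℤ)) ≤ (1 / 2 : ℝ) ^ m :=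
  hirb_root_size_bound_general P β H n m hβ hm hnH S hbin
end
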